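/- arXiv:1607.08312 — 4 statements merged into one kernel-verified Lean document; each statement's English description precedes it below -/
import Mathlib

section
/- Let G be a graph, v a vertex, and Q a maximum clique of the induced subgraph on N(v). If G is claw-free, then for any two nonadjacent vertices w, z in N(v) \ Q, there exist w', z' in Q with ww' and zz' not edges, and moreover wz' and zw' are edges of G. -/
/-!
If some `x ∈ N(v) \ Q` were adjacent to all of `Q`, then `insert x Q` would be a larger clique
in `N(v)`; so `w` and `z` have non-neighbours `w', z' ∈ Q`. Since `w, z, z'` are distinct
neighbours of `v` with `wz` and `zz'` non-edges, claw-freeness forces `wz'` to be an edge,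
and symmetrically `zw'`.
-/

open SimpleGraph

def claw : SimpleGraph (Fin 1 ⊕ Fin 3) := completeBipartiteGraph (Fin 1) (Fin 3)

def ClawFree {V : Type*} (G : SimpleGraph V) : Prop := ¬ Nonempty (claw ↪g G)

/-- `Q` is a maximum clique of the subgraph of `G` induced on the neighborhood of `v`. -/
def IsMaxCliqueInNbhd {V : Type*} (G : SimpleGraph V) (v : V) (Q : Finset V) : Prop :=
  ↑Q ⊆ G.neighborSet v ∧ G.IsClique ↑Q ∧
    ∀ R : Finset V, ↑R ⊆ G.neighborSet v → G.IsClique ↑R → R.card ≤ Q.card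

theorem ClawFree.adj_of_not_adj_of_not_adj {V : Type*} {G : SimpleGraph V} (hG : ClawFree G)
    {v a b c : V} (ha : G.Adj v a) (hb : G.Adj v b) (hc : G.Adj v c)
    (hab : a ≠ b) (hac : a ≠ c) (hbc : b ≠ c) (hnab : ¬G.Adj a b) (hnac : ¬G.Adj a c) :
    G.Adj b c := by
  by_contra hnbc
  let f : Fin 1 ⊕ Fin 3 → V := Sum.elim (fun _ => v) ![a, b, c]
  have hf_inj : f.Injective := by
    rintro (x | x) (y | y) hxy <;> fin_cases x <;> fin_cases y <;>
      simp_all [f, ha.ne, hb.ne, hc.ne, ha.ne', hb.ne', hc.ne', hab.symm, hac.symm, hbc.symm]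
  have hf_adj : ∀ x y, G.Adj (f x) (f y) ↔ claw.Adj x y := by
    rintro (x | x) (y | y) <;> fin_cases x <;> fin_cases y <;>
      simp_all [f, claw, ha.symm, hb.symm, hc.symm, G.adj_comm b a, G.adj_comm c a,
        G.adj_comm c b]
  exact hG ⟨⟨⟨f, hf_inj⟩, hf_adj _ _⟩⟩

theorem IsMaxCliqueInNbhd.exists_not_adj {V : Type*} {G : SimpleGraph V} {v : V} {Q : Finset V}
    (hQ : IsMaxCliqueInNbhd G v Q) {x : V} (hx : x ∈ G.neighborSet v \ ↑Q) :
    ∃ x' ∈ Q, ¬G.Adj x x' := by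
  classical
  obtain ⟨hQv, hQ_clique, hQ_max⟩ := hQ
  by_contra! hxQ
  have hsub : ↑(insert x Q) ⊆ G.neighborSet v := by
    rw [Finset.coe_insert]
    exact Set.insert_subset hx.1 hQv
  have hclique : G.IsClique ↑(insert x Q) := by
    rw [Finset.coe_insert]
    exact hQ_clique.insert fun y hy _ => hxQ y hy
  have hcard := hQ_max _ hsub hclique
  rw [Finset.card_insert_of_notMem hx.2] at hcard
  omega

theorem stmt_1_general {V : Type*} {G : SimpleGraph V}
    (hG : ClawFree G) (v : V) (Q : Finset V) (hQ : IsMaxCliqueInNbhd G v Q)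
    (w z : V) (hw : w ∈ G.neighborSet v \ ↑Q) (hz : z ∈ G.neighborSet v \ ↑Q)
    (hwz : w ≠ z) (hnadj : ¬ G.Adj w z) :
    ∃ w' ∈ Q, ∃ z' ∈ Q, ¬ G.Adj w w' ∧ ¬ G.Adj z z' ∧ G.Adj w z' ∧ G.Adj z w' := by
  obtain ⟨w', hw'Q, hww'⟩ := hQ.exists_not_adj hw
  obtain ⟨z', hz'Q, hzz'⟩ := hQ.exists_not_adj hz
  have hw'v : G.Adj v w' := hQ.1 hw'Q
  have hz'v : G.Adj v z' := hQ.1 hz'Q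
  refine ⟨w', hw'Q, z', hz'Q, hww', hzz', ?_, ?_⟩
  · exact hG.adj_of_not_adj_of_not_adj hz.1 hw.1 hz'v hwz.symm
      (ne_of_mem_of_not_mem hz'Q hz.2).symm (ne_of_mem_of_not_mem hz'Q hw.2).symm
      (fun h => hnadj h.symm) hzz'
  · exact hG.adj_of_not_adj_of_not_adj hw.1 hz.1 hw'v hwz
      (ne_of_mem_of_not_mem hw'Q hw.2).symm (ne_of_mem_of_not_mem hw'Q hz.2).symm hnadj hww'

theorem stmt_1 {V : Type*} [Fintype V] [DecidableEq V] {G : SimpleGraph V}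
    (hG : ClawFree G) (v : V) (Q : Finset V) (hQ : IsMaxCliqueInNbhd G v Q)
    (w z : V) (hw : w ∈ G.neighborSet v \ ↑Q) (hz : z ∈ G.neighborSet v \ ↑Q)
    (hwz : w ≠ z) (hnadj : ¬ G.Adj w z) :
    ∃ w' ∈ Q, ∃ z' ∈ Q, ¬ G.Adj w w' ∧ ¬ G.Adj z z' ∧ G.Adj w z' ∧ G.Adj z w' :=
  stmt_1_general hG v Q hQ w z hw hz hwz hnadj
end

section
/- Let H1 be the graph on vertices {a,b,c,d,e} with edge set {ab, bc, cd, de, ac, bd} (a path a-b-c-d-e together with chords ac and bd). Let G be a graph with no induced K_{1,3} and no induced H1. Let v be a vertex, Q a maximum clique in N(v), and suppose w, z in N(v)\Q are nonadjacent, with w', z' in Q satisfying ww', zz' not in E(G). Then every vertex q in Q \ {w', z'} is adjacent to both w and z. -/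
open SimpleGraph Sym2

/-- `H1`: the path a-b-c-d-e together with chords ac and bd. -/
def H1 : SimpleGraph (Fin 5) :=
  fromEdgeSet {s(0, 1), s(1, 2), s(2, 3), s(3, 4), s(0, 2), s(1, 3)}

def H1Free {V : Type*} (G : SimpleGraph V) : Prop := ¬ Nonempty (H1 ↪g G)

/-! Claw-freeness at `v` forces every vertex of `Q` to be adjacent to `w` or to `z`. Hence `z'`
sees `w`, `w'` sees `z`, and `w' ≠ z'`. A vertex `q ∈ Q` seeing `z` but not `w` would then make
`z, w', q, z', w` an induced copy of `H1`. -/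

section

variable {V : Type*} {G : SimpleGraph V}

lemma ClawFree.adj_or_adj {x a b c : V} (hG : ClawFree G)
    (hxa : G.Adj x a) (hxb : G.Adj x b) (hxc : G.Adj x c)
    (hab : a ≠ b) (hnab : ¬ G.Adj a b) (hca : c ≠ a) (hcb : c ≠ b) :
    G.Adj c a ∨ G.Adj c b := by
  by_contra! hc
  have := hxa.ne; have := hxb.ne; have := hxc.ne
  refine hG ⟨⟨⟨Sum.elim (fun _ => x) ![a, b, c], ?_⟩, ?_⟩⟩
  · rintro (i | i) (j | j) h <;> fin_cases i <;> fin_cases j <;> simp_all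
  · rintro (i | i) (j | j) <;> fin_cases i <;> fin_cases j <;>
      simp_all [claw, G.adj_comm, DFunLike.coe]

lemma H1Free.adj_of_chorded_path {a b c d e : V} (hG : H1Free G)
    (hab : G.Adj a b) (hbc : G.Adj b c) (hcd : G.Adj c d) (hde : G.Adj d e)
    (hac : G.Adj a c) (hbd : G.Adj b d)
    (had : ¬ G.Adj a d) (hae : ¬ G.Adj a e) (hbe : ¬ G.Adj b e)
    (had' : a ≠ d) (hae' : a ≠ e) (hbe' : b ≠ e) (hce' : c ≠ e) :
    G.Adj c e := by
  by_contra hce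
  have := hab.ne; have := hbc.ne; have := hcd.ne; have := hde.ne
  have := hac.ne; have := hbd.ne
  refine hG ⟨⟨⟨![a, b, c, d, e], ?_⟩, ?_⟩⟩
  · intro i j h
    fin_cases i <;> fin_cases j <;> simp_all
  · intro i j
    fin_cases i <;> fin_cases j <;>
      simp_all [H1, Sym2.eq, Sym2.rel_iff', G.adj_comm, DFunLike.coe]

lemma adj_of_mem_clique_of_claw_h1_free {v w z w' z' q : V} {Q : Set V}
    (hG : ClawFree G) (hG1 : H1Free G) (hQv : Q ⊆ G.neighborSet v) (hQ : G.IsClique Q)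
    (hvw : G.Adj v w) (hvz : G.Adj v z) (hwQ : w ∉ Q) (hzQ : z ∉ Q)
    (hwz : w ≠ z) (hnadj : ¬ G.Adj w z)
    (hw' : w' ∈ Q) (hz' : z' ∈ Q) (hww' : ¬ G.Adj w w') (hzz' : ¬ G.Adj z z')
    (hq : q ∈ Q) (hqw' : q ≠ w') (hqz' : q ≠ z') :
    G.Adj q w := by
  have hcover {c : V} (hc : c ∈ Q) : G.Adj c w ∨ G.Adj c z :=
    hG.adj_or_adj hvw hvz (hQv hc) hwz hnadj
      (ne_of_mem_of_not_mem hc hwQ) (ne_of_mem_of_not_mem hc hzQ)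
  have hz'w : G.Adj z' w := (hcover hz').resolve_right (fun h => hzz' h.symm)
  have hw'z : G.Adj w' z := (hcover hw').resolve_left (fun h => hww' h.symm)
  have hw'z' : w' ≠ z' := by
    rintro rfl
    exact hzz' hw'z.symm
  refine (hcover hq).elim id fun hqz => ?_
  exact hG1.adj_of_chorded_path hw'z.symm (hQ hw' hq hqw'.symm) (hQ hq hz' hqz')
    hz'w hqz.symm (hQ hw' hz' hw'z') hzz' (fun h => hnadj h.symm) (fun h => hww' h.symm)
    (ne_of_mem_of_not_mem hz' hzQ).symm hwz.symm
    (ne_of_mem_of_not_mem hw' hwQ) (ne_of_mem_of_not_mem hq hwQ)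

end

theorem stmt_2_general {V : Type*} {G : SimpleGraph V}
    (hG : ClawFree G) (hG1 : H1Free G) (v : V) (Q : Finset V)
    (hQ : IsMaxCliqueInNbhd G v Q)
    (w z : V) (hw : w ∈ G.neighborSet v \ ↑Q) (hz : z ∈ G.neighborSet v \ ↑Q)
    (hwz : w ≠ z) (hnadj : ¬ G.Adj w z)
    (w' z' : V) (hw' : w' ∈ Q) (hz' : z' ∈ Q)
    (hww' : ¬ G.Adj w w') (hzz' : ¬ G.Adj z z') :
    ∀ q ∈ Q, q ≠ w' → q ≠ z' → G.Adj q w ∧ G.Adj q z := by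
  obtain ⟨hQv, hQ, -⟩ := hQ
  intro q hq hqw' hqz'
  exact ⟨adj_of_mem_clique_of_claw_h1_free hG hG1 hQv hQ hw.1 hz.1 hw.2 hz.2 hwz hnadj
      hw' hz' hww' hzz' hq hqw' hqz',
    adj_of_mem_clique_of_claw_h1_free hG hG1 hQv hQ hz.1 hw.1 hz.2 hw.2 hwz.symm
      (fun h => hnadj h.symm) hz' hw' hzz' hww' hq hqz' hqw'⟩

theorem stmt_2 {V : Type*} [Fintype V] [DecidableEq V] {G : SimpleGraph V}
    (hG : ClawFree G) (hG1 : H1Free G) (v : V) (Q : Finset V)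
    (hQ : IsMaxCliqueInNbhd G v Q)
    (w z : V) (hw : w ∈ G.neighborSet v \ ↑Q) (hz : z ∈ G.neighborSet v \ ↑Q)
    (hwz : w ≠ z) (hnadj : ¬ G.Adj w z)
    (w' z' : V) (hw' : w' ∈ Q) (hz' : z' ∈ Q)
    (hww' : ¬ G.Adj w w') (hzz' : ¬ G.Adj z z') :
    ∀ q ∈ Q, q ≠ w' → q ≠ z' → G.Adj q w ∧ G.Adj q z :=
  stmt_2_general hG hG1 v Q hQ w z hw hz hwz hnadj w' z' hw' hz' hww' hzz'
end

section
/- The join of m copies of C_5 is claw-free (contains no induced K_{1,3}). -/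
open SimpleGraph

/-- The join of `m` disjoint copies of the 5-cycle: vertices in different copies are
always adjacent, and vertices within a copy are adjacent as in `C₅`. -/
def joinC5 (m : ℕ) : SimpleGraph (Fin m × Fin 5) where
  Adj x y := x.1 ≠ y.1 ∨ (x.1 = y.1 ∧ (cycleGraph 5).Adj x.2 y.2)
  symm := by
    constructor
    intro x y h
    rcases h with h | ⟨h1, h2⟩
    · exact Or.inl h.symm
    · exact Or.inr ⟨h1.symm, h2.symm⟩
  loopless := by
    constructor
    intro x h
    rcases h with h | ⟨_, h2⟩
    · exact h rfl
    · exact (cycleGraph 5).loopless.irrefl _ h2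

/-! The three leaves of a claw are pairwise non-adjacent. In the join, vertices of different
copies are adjacent, so the leaves would lie in one copy of `C₅` and form an independent set of
size three there; but the independence number of `C₅` is two. -/

theorem SimpleGraph.CliqueFree.of_hom {V W : Type*} {G : SimpleGraph V} {H : SimpleGraph W}
    {n : ℕ} (f : G →g H) (hH : H.CliqueFree n) : G.CliqueFree n := by
  contrapose! hH
  rw [not_cliqueFree_iff_top_isContained] at hH ⊢
  obtain ⟨c⟩ := hH
  exact ⟨(f.comp c.toHom).toCopy (Hom.injective_of_top_hom _)⟩

theorem not_cliqueFree_three_compl_claw : ¬ clawᶜ.CliqueFree 3 :=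
  (is3Clique_triple_iff (a := .inr 0) (b := .inr 1) (c := .inr 2)).2
    (by simp [claw]) |>.not_cliqueFree

theorem isEmpty_claw_embedding_of_compl_cliqueFree_three {V : Type*} {G : SimpleGraph V}
    (hG : Gᶜ.CliqueFree 3) : IsEmpty (claw ↪g G) :=
  ⟨fun f => not_cliqueFree_three_compl_claw (hG.comap (Embedding.complEquiv f).toCopy.isContained)⟩

theorem cycleGraph_five_compl_cliqueFree_three : (cycleGraph 5)ᶜ.CliqueFree 3 := by
  unfold CliqueFree
  decide

theorem joinC5_compl_adj {m : ℕ} {x y : Fin m × Fin 5} :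
    (joinC5 m)ᶜ.Adj x y ↔ x.1 = y.1 ∧ (cycleGraph 5)ᶜ.Adj x.2 y.2 := by
  simp only [compl_adj, joinC5, Ne, Prod.ext_iff]
  tauto

theorem joinC5_compl_cliqueFree_three (m : ℕ) : (joinC5 m)ᶜ.CliqueFree 3 :=
  cycleGraph_five_compl_cliqueFree_three.of_hom ⟨Prod.snd, fun h => (joinC5_compl_adj.1 h).2⟩

theorem stmt_9 (m : ℕ) : ¬ Nonempty (claw ↪g joinC5 m) :=
  not_nonempty_iff.2 <|
    isEmpty_claw_embedding_of_compl_cliqueFree_three (joinC5_compl_cliqueFree_three m)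
end

section
/- Let G be claw-free and H1-free, let v be a vertex, Q a maximum clique in N(v), and suppose N(v) \ Q contains two nonadjacent vertices w, z and a third vertex x with |N(v) \ Q| ≥ 3. Then x is adjacent to both w and z. -/
/-!
Claw-freeness at `v` forces `x` to be adjacent to `w` or `z`; by symmetry let `x ~ z` and
`x ≁ w`. Maximality of `Q` gives `c ∈ Q` with `c ≁ w`, and claws at `v` force `c ~ x`, `c ~ z`.
A vertex `d ∈ Q` adjacent to exactly one of `x`, `z` would make `x, z, c, d, w` an induced `H1`,
so `x` and `z` have the same neighbours in `Q`. These neighbours together with `x` and `z` form a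
clique in `N(v)`, so at least two vertices `a ≠ b` of `Q` miss `x`, and then `w, a, b, c, x` is
an induced `H1`.
-/

open SimpleGraph

section

variable {V : Type*} {G : SimpleGraph V}

theorem nonempty_claw_embedding {c a b d : V} (hab : a ≠ b) (had : a ≠ d) (hbd : b ≠ d)
    (hca : G.Adj c a) (hcb : G.Adj c b) (hcd : G.Adj c d)
    (hnab : ¬ G.Adj a b) (hnad : ¬ G.Adj a d) (hnbd : ¬ G.Adj b d) :
    Nonempty (claw ↪g G) := by
  have hf : (Sum.elim (fun _ : Fin 1 => c) ![a, b, d]).Injective := by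
    rintro (i | i) (j | j) hij <;> fin_cases i <;> fin_cases j <;>
      simp_all [eq_comm, G.ne_of_adj]
  refine ⟨⟨⟨_, hf⟩, ?_⟩⟩
  rintro (i | i) (j | j) <;> fin_cases i <;> fin_cases j <;> simp_all [claw, G.adj_comm]

theorem nonempty_H1_embedding {a b c d e : V}
    (had : a ≠ d) (hae : a ≠ e) (hbe : b ≠ e) (hce : c ≠ e)
    (hab : G.Adj a b) (hbc : G.Adj b c) (hcd : G.Adj c d) (hde : G.Adj d e)
    (hac : G.Adj a c) (hbd : G.Adj b d)
    (hnad : ¬ G.Adj a d) (hnae : ¬ G.Adj a e) (hnbe : ¬ G.Adj b e) (hnce : ¬ G.Adj c e) :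
    Nonempty (H1 ↪g G) := by
  have hf : (![a, b, c, d, e]).Injective := by
    intro i j hij
    fin_cases i <;> fin_cases j <;> simp_all [eq_comm, G.ne_of_adj]
  refine ⟨⟨⟨_, hf⟩, ?_⟩⟩
  intro i j
  fin_cases i <;> fin_cases j <;> simp_all [H1, G.adj_comm]

theorem adj_of_not_adj_of_clawFree (hclaw : ¬ Nonempty (claw ↪g G)) {v : V} {Q : Finset V}
    (hQ : ↑Q ⊆ G.neighborSet v) {u y q : V} (hu : u ∈ G.neighborSet v \ ↑Q)
    (hy : y ∈ G.neighborSet v \ ↑Q) (huy : u ≠ y) (hq : q ∈ Q)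
    (hnuy : ¬ G.Adj u y) (hnuq : ¬ G.Adj u q) : G.Adj y q :=
  by_contra fun hnyq => hclaw <| nonempty_claw_embedding huy
    (ne_of_mem_of_not_mem hq hu.2).symm (ne_of_mem_of_not_mem hq hy.2).symm
    hu.1 hy.1 (hQ hq) hnuy hnuq hnyq

namespace IsMaxCliqueInNbhd

variable {v : V} {Q : Finset V}

theorem card_add_card_le (hQ : IsMaxCliqueInNbhd G v Q) {K P : Finset V}
    (hK : ↑K ⊆ G.neighborSet v \ ↑Q) (hKc : G.IsClique (K : Set V)) (hP : P ⊆ Q)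
    (hKP : ∀ k ∈ K, ∀ p ∈ P, G.Adj k p) : K.card + P.card ≤ Q.card := by
  classical
  have hdisj : Disjoint K P := Finset.disjoint_left.2 fun k hk hkP => (hK hk).2 (hP hkP)
  rw [← Finset.card_union_of_disjoint hdisj]
  refine hQ.2.2 _ ?_ ?_ <;> rw [Finset.coe_union]
  · exact Set.union_subset (hK.trans Set.sdiff_subset) ((Finset.coe_subset.2 hP).trans hQ.1)
  · exact Set.pairwise_union.2 ⟨hKc, hQ.2.1.subset (Finset.coe_subset.2 hP),
      fun k hk p hp _ => ⟨hKP k hk p hp, (hKP k hk p hp).symm⟩⟩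

theorem exists_not_adj_s11 (hQ : IsMaxCliqueInNbhd G v Q) {u : V}
    (hu : u ∈ G.neighborSet v \ ↑Q) : ∃ q ∈ Q, ¬ G.Adj u q := by
  by_contra! h
  have := hQ.card_add_card_le (K := {u}) (by simpa using hu) (by simp) subset_rfl
    (by simpa using h)
  simp at this

theorem adj_of_adj (hclaw : ¬ Nonempty (claw ↪g G)) (h1 : ¬ Nonempty (H1 ↪g G))
    (hQ : IsMaxCliqueInNbhd G v Q) {w x z c d : V}
    (hw : w ∈ G.neighborSet v \ ↑Q) (hx : x ∈ G.neighborSet v \ ↑Q)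
    (hwx : ¬ G.Adj w x) (hwz : ¬ G.Adj w z) (hxz : G.Adj x z)
    (hc : c ∈ Q) (hcw : ¬ G.Adj c w) (hcx : G.Adj c x) (hcz : G.Adj c z)
    (hd : d ∈ Q) (hdz : G.Adj d z) : G.Adj d x := by
  by_contra hdx
  have hxw : x ≠ w := fun h => hcw (h ▸ hcx)
  have hzw : z ≠ w := fun h => hcw (h ▸ hcz)
  have hwd : G.Adj w d := adj_of_not_adj_of_clawFree hclaw hQ.1 hx hw hxw hd
    (fun h => hwx h.symm) (fun h => hdx h.symm)
  have hcd : G.Adj c d := hQ.2.1 hc hd fun h => hdx (h ▸ hcx)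
  exact h1 <| nonempty_H1_embedding (ne_of_mem_of_not_mem hd hx.2).symm hxw hzw
    (ne_of_mem_of_not_mem hc hw.2) hxz hcz.symm hcd hwd.symm hcx.symm hdz.symm
    (fun h => hdx h.symm) (fun h => hwx h.symm) (fun h => hwz h.symm) hcw

theorem eq_of_not_adj (hclaw : ¬ Nonempty (claw ↪g G)) (h1 : ¬ Nonempty (H1 ↪g G))
    (hQ : IsMaxCliqueInNbhd G v Q) {w x c a b : V}
    (hw : w ∈ G.neighborSet v \ ↑Q) (hx : x ∈ G.neighborSet v \ ↑Q) (hwx : ¬ G.Adj w x)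
    (hc : c ∈ Q) (hcw : ¬ G.Adj c w) (hcx : G.Adj c x)
    (ha : a ∈ Q) (hb : b ∈ Q) (hxa : ¬ G.Adj x a) (hxb : ¬ G.Adj x b) : a = b := by
  by_contra hab
  have hxw : x ≠ w := fun h => hcw (h ▸ hcx)
  have hwa : G.Adj w a :=
    adj_of_not_adj_of_clawFree hclaw hQ.1 hx hw hxw ha (fun h => hwx h.symm) hxa
  have hwb : G.Adj w b :=
    adj_of_not_adj_of_clawFree hclaw hQ.1 hx hw hxw hb (fun h => hwx h.symm) hxb
  have hac : G.Adj a c := hQ.2.1 ha hc fun h => hxa (h ▸ hcx.symm)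
  have hbc : G.Adj b c := hQ.2.1 hb hc fun h => hxb (h ▸ hcx.symm)
  exact h1 <| nonempty_H1_embedding (ne_of_mem_of_not_mem hc hw.2).symm hxw.symm
    (ne_of_mem_of_not_mem ha hx.2) (ne_of_mem_of_not_mem hb hx.2) hwa (hQ.2.1 ha hb hab) hbc
    hcx hwb hac (fun h => hcw h.symm) hwx (fun h => hxa h.symm) (fun h => hxb h.symm)

theorem adj_of_adj_of_not_adj (hclaw : ¬ Nonempty (claw ↪g G))
    (h1 : ¬ Nonempty (H1 ↪g G)) (hQ : IsMaxCliqueInNbhd G v Q) {w x z : V}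
    (hw : w ∈ G.neighborSet v \ ↑Q) (hx : x ∈ G.neighborSet v \ ↑Q)
    (hz : z ∈ G.neighborSet v \ ↑Q) (hwz : ¬ G.Adj w z) (hxz : G.Adj x z) : G.Adj x w := by
  classical
  by_contra hxw
  have hwx : ¬ G.Adj w x := fun h => hxw h.symm
  obtain ⟨c, hc, hwc⟩ := hQ.exists_not_adj_s11 hw
  have hcw : ¬ G.Adj c w := fun h => hwc h.symm
  have hcx : G.Adj c x := (adj_of_not_adj_of_clawFree hclaw hQ.1 hw hx
    (fun h => hwz (h ▸ hxz)) hc hwx hwc).symm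
  have hcz : G.Adj c z := (adj_of_not_adj_of_clawFree hclaw hQ.1 hw hz
    (fun h => hwx (h ▸ hxz.symm)) hc hwz hwc).symm
  have hzx : ∀ d ∈ Q, G.Adj d x → G.Adj d z := fun d hd =>
    hQ.adj_of_adj hclaw h1 hw hz hwz hwx hxz.symm hc hcw hcz hcx hd
  have hcard_adj : ({x, z} : Finset V).card + (Q.filter (G.Adj x ·)).card ≤ Q.card := by
    refine hQ.card_add_card_le ?_ ?_ (Finset.filter_subset _ _) ?_
    · simp [Set.insert_subset_iff, hx, hz]
    · simpa using fun _ => hxz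
    · simp only [Finset.mem_insert, Finset.mem_singleton, Finset.mem_filter]
      rintro k (rfl | rfl) p ⟨hp, hkp⟩
      exacts [hkp, (hzx p hp hkp.symm).symm]
  have hcard_nonadj : (Q.filter (¬ G.Adj x ·)).card ≤ 1 := Finset.card_le_one.2 fun a ha b hb =>
    hQ.eq_of_not_adj hclaw h1 hw hx hwx hc hcw hcx
      (Finset.mem_filter.1 ha).1 (Finset.mem_filter.1 hb).1
      (Finset.mem_filter.1 ha).2 (Finset.mem_filter.1 hb).2
  rw [Finset.card_pair hxz.ne] at hcard_adj
  have := Finset.card_filter_add_card_filter_not (s := Q) (G.Adj x ·)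
  omega

end IsMaxCliqueInNbhd

end

theorem stmt_11_general {V : Type*} {G : SimpleGraph V}
    (hclaw : ¬ Nonempty (claw ↪g G)) (h1 : ¬ Nonempty (H1 ↪g G))
    (v : V) (Q : Finset V) (hQ : IsMaxCliqueInNbhd G v Q)
    (w z x : V) (hw : w ∈ G.neighborSet v \ ↑Q) (hz : z ∈ G.neighborSet v \ ↑Q)
    (hx : x ∈ G.neighborSet v \ ↑Q) (hwz : w ≠ z) (hnadj : ¬ G.Adj w z)
    (hxw : x ≠ w) (hxz : x ≠ z) :
    G.Adj x w ∧ G.Adj x z := by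
  have hxw_or_hxz : G.Adj x w ∨ G.Adj x z := by
    by_contra! h
    exact hclaw <| nonempty_claw_embedding hwz hxw.symm hxz.symm hw.1 hz.1 hx.1 hnadj
      (fun h' => h.1 h'.symm) (fun h' => h.2 h'.symm)
  rcases hxw_or_hxz with hxw | hxz
  · exact ⟨hxw, hQ.adj_of_adj_of_not_adj hclaw h1 hz hx hw (fun h => hnadj h.symm) hxw⟩
  · exact ⟨hQ.adj_of_adj_of_not_adj hclaw h1 hw hx hz hnadj hxz, hxz⟩

theorem stmt_11 {V : Type*} [Fintype V] [DecidableEq V] {G : SimpleGraph V}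
    (hclaw : ¬ Nonempty (claw ↪g G)) (h1 : ¬ Nonempty (H1 ↪g G))
    (v : V) (Q : Finset V) (hQ : IsMaxCliqueInNbhd G v Q)
    (w z x : V) (hw : w ∈ G.neighborSet v \ ↑Q) (hz : z ∈ G.neighborSet v \ ↑Q)
    (hx : x ∈ G.neighborSet v \ ↑Q) (hwz : w ≠ z) (hnadj : ¬ G.Adj w z)
    (hxw : x ≠ w) (hxz : x ≠ z)
    (hcard : 3 ≤ (G.neighborSet v \ ↑Q).ncard) :
    G.Adj x w ∧ G.Adj x z :=
  stmt_11_general hclaw h1 v Q hQ w z x hw hz hx hwz hnadj hxw hxz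
end
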